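/- Let ι be a finite index type and, for each i ∈ ι, let A_i be a real matrix with row index set m_i and fixed common column index set n. Let C be the vertical concatenation of the family (A_i), i.e., the matrix with row index set Σ i, m_i whose (⟨i, r⟩, c) entry is (A_i) r c. Then ∑_{i ∈ ι} ‖A_i‖_* ≥ ‖C‖_*. -/

import Mathlib

open Matrix

/-- The trace norm (nuclear norm) of a real matrix `A`: the trace of the
positive semidefinite square root of `Aᵀ * A`. -/
noncomputable def traceNorm {m n : Type*} [Fintype m] [Fintype n] [DecidableEq n]
    (A : Matrix m n ℝ) : ℝ :=
  (((Matrix.posSemidef_conjTranspose_mul_self A).1.eigenvectorUnitary : Matrix n n ℝ) *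
    diagonal (((↑) : ℝ → ℝ) ∘ (√·) ∘ (Matrix.posSemidef_conjTranspose_mul_self A).1.eigenvalues) *
    (star (Matrix.posSemidef_conjTranspose_mul_self A).1.eigenvectorUnitary :
      Matrix n n ℝ)).trace

section Aux

variable {n : Type*} [Fintype n] [DecidableEq n] {m : Type*} [Fintype m]

lemma trace_sqrt_eq {B : Matrix n n ℝ} (hB : B.PosSemidef) :
    ((hB.1.eigenvectorUnitary : Matrix n n ℝ) *
      diagonal (((↑) : ℝ → ℝ) ∘ (√·) ∘ hB.1.eigenvalues) *
      (star hB.1.eigenvectorUnitary : Matrix n n ℝ)).trace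
      = ∑ j, Real.sqrt (hB.1.eigenvalues j) := by
  rw [Matrix.trace_mul_cycle]
  rw [show (star hB.1.eigenvectorUnitary : Matrix n n ℝ) * hB.1.eigenvectorUnitary.1 = 1 from
    Unitary.coe_star_mul_self _, one_mul, trace_diagonal]
  simp

lemma spec_diag' {B : Matrix n n ℝ} (hB : B.PosSemidef) :
    B = (hB.1.eigenvectorUnitary : Matrix n n ℝ) * diagonal hB.1.eigenvalues *
      (hB.1.eigenvectorUnitary : Matrix n n ℝ)ᴴ := by
  have h := hB.1.spectral_theorem
  rw [Unitary.conjStarAlgAut_apply, Matrix.star_eq_conjTranspose] at h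
  refine h.trans ?_
  norm_num [Function.comp]

lemma trace_eq_sum_basis {B : Matrix n n ℝ} (hB : B.PosSemidef) (M : Matrix n n ℝ) :
    M.trace = ∑ j, (⇑(hB.1.eigenvectorBasis j)) ⬝ᵥ (M *ᵥ ⇑(hB.1.eigenvectorBasis j)) := by
  have hU : (hB.1.eigenvectorUnitary.1 : Matrix n n ℝ) * star hB.1.eigenvectorUnitary.1 = 1 :=
    Unitary.coe_mul_star_self _
  calc M.trace = (M * (hB.1.eigenvectorUnitary.1 * star hB.1.eigenvectorUnitary.1)).trace := by
        rw [hU, mul_one]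
    _ = ((star hB.1.eigenvectorUnitary.1 : Matrix n n ℝ) * M * hB.1.eigenvectorUnitary.1).trace := by
        rw [← mul_assoc, trace_mul_cycle]
    _ = ∑ j, (⇑(hB.1.eigenvectorBasis j)) ⬝ᵥ (M *ᵥ ⇑(hB.1.eigenvectorBasis j)) := by
        simp only [Matrix.trace, Matrix.diag, Matrix.mul_apply, dotProduct, Matrix.mulVec,
          Matrix.star_eq_conjTranspose, Matrix.conjTranspose_apply, star_trivial,
          IsHermitian.eigenvectorUnitary_apply]
        refine Finset.sum_congr rfl fun j _ => ?_
        simp only [Finset.sum_mul, Finset.mul_sum]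
        rw [Finset.sum_comm]
        exact Finset.sum_congr rfl fun a _ => Finset.sum_congr rfl fun b _ => by ring

omit [DecidableEq n] in
lemma dot_mulVec_self (M : Matrix m n ℝ) (x : n → ℝ) :
    (M *ᵥ x) ⬝ᵥ (M *ᵥ x) = x ⬝ᵥ ((Mᴴ * M) *ᵥ x) := by
  rw [← mulVec_mulVec, Matrix.dotProduct_mulVec x]
  congr 1
  have := Matrix.star_mulVec (M := M) (v := x)
  simpa [star_trivial] using this

lemma eig_eq_norm_sq (A : Matrix m n ℝ) (j : n) :
    (Matrix.posSemidef_conjTranspose_mul_self A).1.eigenvalues j =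
      (A *ᵥ ⇑((Matrix.posSemidef_conjTranspose_mul_self A).1.eigenvectorBasis j)) ⬝ᵥ
      (A *ᵥ ⇑((Matrix.posSemidef_conjTranspose_mul_self A).1.eigenvectorBasis j)) := by
  set hB := Matrix.posSemidef_conjTranspose_mul_self A
  have h := hB.1.eigenvalues_eq j
  rw [h, dot_mulVec_self]
  simp [dotProduct]

lemma basis_dot_self {B : Matrix n n ℝ} (hB : B.PosSemidef) (j : n) :
    (⇑(hB.1.eigenvectorBasis j)) ⬝ᵥ (⇑(hB.1.eigenvectorBasis j)) = 1 := by
  have h := hB.1.eigenvectorBasis.orthonormal.1 j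
  have h2 : (inner ℝ (hB.1.eigenvectorBasis j) (hB.1.eigenvectorBasis j) : ℝ) = 1 := by
    rw [real_inner_self_eq_norm_sq, h]; norm_num
  rw [← h2, PiLp.inner_apply]
  simp [dotProduct, pow_two]

omit [DecidableEq n] in
lemma dot_le_sqrt_mul_sqrt (u v : n → ℝ) :
    u ⬝ᵥ v ≤ Real.sqrt (u ⬝ᵥ u) * Real.sqrt (v ⬝ᵥ v) := by
  have := Real.sum_mul_le_sqrt_mul_sqrt Finset.univ u v
  simpa [dotProduct, pow_two] using this

lemma trace_le_traceNorm (A W : Matrix m n ℝ)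
    (hW : ∀ x : n → ℝ, (W *ᵥ x) ⬝ᵥ (W *ᵥ x) ≤ x ⬝ᵥ x) :
    (Wᴴ * A).trace ≤ traceNorm A := by
  set hB := Matrix.posSemidef_conjTranspose_mul_self A with hBdef
  rw [traceNorm, trace_sqrt_eq (Matrix.posSemidef_conjTranspose_mul_self A), trace_eq_sum_basis hB]
  apply Finset.sum_le_sum
  intro j _
  set w : n → ℝ := ⇑(hB.1.eigenvectorBasis j) with hw
  have key : w ⬝ᵥ ((Wᴴ * A) *ᵥ w) = (W *ᵥ w) ⬝ᵥ (A *ᵥ w) := by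
    rw [← mulVec_mulVec, Matrix.dotProduct_mulVec]
    congr 1
    have := Matrix.star_mulVec (M := W) (v := w)
    simpa [star_trivial] using this.symm
  rw [key]
  calc (W *ᵥ w) ⬝ᵥ (A *ᵥ w)
      ≤ Real.sqrt ((W *ᵥ w) ⬝ᵥ (W *ᵥ w)) * Real.sqrt ((A *ᵥ w) ⬝ᵥ (A *ᵥ w)) :=
        dot_le_sqrt_mul_sqrt _ _
    _ ≤ 1 * Real.sqrt ((A *ᵥ w) ⬝ᵥ (A *ᵥ w)) := by
        apply mul_le_mul_of_nonneg_right _ (Real.sqrt_nonneg _)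
        have h1 : (W *ᵥ w) ⬝ᵥ (W *ᵥ w) ≤ 1 := by
          have := hW w
          rwa [basis_dot_self hB j] at this
        calc Real.sqrt ((W *ᵥ w) ⬝ᵥ (W *ᵥ w)) ≤ Real.sqrt 1 := Real.sqrt_le_sqrt h1
          _ = 1 := Real.sqrt_one
    _ = Real.sqrt (hB.1.eigenvalues j) := by
        rw [one_mul, eig_eq_norm_sq A j]

end Aux

/-- The sum of the trace norms of a finite family of matrices `A i` (with common
column index set) is at least the trace norm of their vertical concatenation. -/
theorem sum_traceNorm_ge_traceNorm_vconcat {ι : Type*} [Fintype ι] {m : ι → Type*}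
    [∀ i, Fintype (m i)] {n : Type*} [Fintype n] [DecidableEq n]
    (A : ∀ i, Matrix (m i) n ℝ) :
    ∑ i, traceNorm (A i) ≥
      traceNorm (Matrix.of fun (p : Σ i, m i) (c : n) => A p.1 p.2 c) := by

  classical
  set C : Matrix (Σ i, m i) n ℝ := Matrix.of fun (p : Σ i, m i) (c : n) => A p.1 p.2 c with hCdef
  set hB := Matrix.posSemidef_conjTranspose_mul_self C with hBdef
  set V : Matrix n n ℝ := (hB.1.eigenvectorUnitary : Matrix n n ℝ) with hVdef
  set μ : n → ℝ := hB.1.eigenvalues with hmu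
  have hμ0 : ∀ j, 0 ≤ μ j := fun j => hB.eigenvalues_nonneg j
  have hVV : Vᴴ * V = 1 := by
    rw [hVdef, ← Matrix.star_eq_conjTranspose]; exact Unitary.coe_star_mul_self _
  have hVV' : V * Vᴴ = 1 := by
    rw [hVdef, ← Matrix.star_eq_conjTranspose]; exact Unitary.coe_mul_star_self _
  have hBdiag : Cᴴ * C = V * diagonal μ * Vᴴ := spec_diag' hB
  have hcol : ∀ X : Matrix n n ℝ, Vᴴ * (V * X) = X := fun X => by
    rw [← Matrix.mul_assoc, hVV, Matrix.one_mul]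
  set d : n → ℝ := fun j => if μ j = 0 then 0 else 1 / Real.sqrt (μ j) with hd
  set e : n → ℝ := fun j => d j * (μ j * d j) with he
  have he0 : ∀ j, 0 ≤ e j := by
    intro j
    rw [he, hd]
    by_cases h : μ j = 0
    · simp [h]
    · simp only [h, if_false]
      have h1 := hμ0 j
      positivity
  have he1 : ∀ j, e j ≤ 1 := by
    intro j
    rw [he, hd]
    by_cases h : μ j = 0
    · simp [h]
    · simp only [h, if_false]
      rw [show 1 / Real.sqrt (μ j) * (μ j * (1 / Real.sqrt (μ j)))
          = μ j / (Real.sqrt (μ j) * Real.sqrt (μ j)) by ring,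
        Real.mul_self_sqrt (hμ0 j), div_self h]
  set N : Matrix n n ℝ := V * diagonal d * Vᴴ with hN
  have hNH : Nᴴ = N := by
    rw [hN]
    simp only [Matrix.conjTranspose_mul, Matrix.conjTranspose_conjTranspose,
      Matrix.diagonal_conjTranspose, star_trivial, Matrix.mul_assoc]
  set Q : Matrix (Σ i, m i) n ℝ := C * N with hQ
  -- trace identity
  have hQHC : Qᴴ * C = N * (Cᴴ * C) := by
    rw [hQ, Matrix.conjTranspose_mul, hNH, Matrix.mul_assoc]
  have htr : (Qᴴ * C).trace = ∑ j, Real.sqrt (μ j) := by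
    rw [hQHC, hBdiag, hN]
    have h1 : V * diagonal d * Vᴴ * (V * (diagonal μ * Vᴴ))
        = V * (diagonal d * (diagonal μ * Vᴴ)) := by
      simp only [Matrix.mul_assoc, hcol]
    rw [Matrix.mul_assoc V (diagonal μ) Vᴴ, h1, Matrix.trace_mul_comm]
    have h2 : diagonal d * (diagonal μ * Vᴴ) * V = diagonal d * diagonal μ := by
      rw [Matrix.mul_assoc, Matrix.mul_assoc, hVV, Matrix.mul_one]
    rw [h2, Matrix.diagonal_mul_diagonal, Matrix.trace_diagonal]
    refine Finset.sum_congr rfl fun j _ => ?_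
    rw [hd]
    by_cases h : μ j = 0
    · simp [h]
    · simp only [h, if_false]
      rw [one_div, inv_mul_eq_div, Real.div_sqrt]
  -- Q^T Q
  have hQQ : Qᴴ * Q = V * diagonal e * Vᴴ := by
    rw [hQ, Matrix.conjTranspose_mul, hNH]
    calc N * Cᴴ * (C * N) = N * (Cᴴ * C) * N := by simp only [Matrix.mul_assoc]
      _ = V * diagonal e * Vᴴ := by
          rw [hBdiag, hN]
          have h1 : V * diagonal d * Vᴴ * (V * diagonal μ * Vᴴ) * (V * diagonal d * Vᴴ)
              = V * (diagonal d * (diagonal μ * (diagonal d * Vᴴ))) := by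
            simp only [Matrix.mul_assoc, hcol]
          rw [h1]
          rw [show diagonal d * (diagonal μ * (diagonal d * Vᴴ))
              = diagonal d * (diagonal μ * diagonal d) * Vᴴ by simp only [Matrix.mul_assoc],
            Matrix.diagonal_mul_diagonal, Matrix.diagonal_mul_diagonal, ← Matrix.mul_assoc]
  -- contraction property of Q
  have hQcon : ∀ x : n → ℝ, (Q *ᵥ x) ⬝ᵥ (Q *ᵥ x) ≤ x ⬝ᵥ x := by
    intro x
    rw [dot_mulVec_self, hQQ]
    have hy : ∀ z : n → ℝ, x ⬝ᵥ (V *ᵥ z) = (Vᴴ *ᵥ x) ⬝ᵥ z := by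
      intro z
      rw [Matrix.dotProduct_mulVec]
      congr 1
      have := Matrix.star_mulVec (M := Vᴴ) (v := x)
      simpa [star_trivial] using this.symm
    set y : n → ℝ := Vᴴ *ᵥ x with hyy
    have hyx : y ⬝ᵥ y = x ⬝ᵥ x := by
      rw [hyy, dot_mulVec_self, Matrix.conjTranspose_conjTranspose, hVV', Matrix.one_mulVec]
    calc x ⬝ᵥ ((V * diagonal e * Vᴴ) *ᵥ x)
        = x ⬝ᵥ (V *ᵥ (diagonal e *ᵥ y)) := by
          rw [← Matrix.mulVec_mulVec, ← Matrix.mulVec_mulVec]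
      _ = y ⬝ᵥ (diagonal e *ᵥ y) := hy _
      _ = ∑ j, e j * (y j * y j) := by
          simp only [dotProduct, Matrix.mulVec_diagonal]
          exact Finset.sum_congr rfl fun j _ => by ring
      _ ≤ ∑ j, y j * y j := by
          refine Finset.sum_le_sum fun j _ => ?_
          have h1 : 0 ≤ y j * y j := mul_self_nonneg _
          nlinarith [he0 j, he1 j]
      _ = y ⬝ᵥ y := rfl
      _ = x ⬝ᵥ x := hyx
  -- blocks of Q
  set Qb : ∀ i, Matrix (m i) n ℝ := fun i => Matrix.of fun r c => Q ⟨i, r⟩ c with hQb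
  have hQbV : ∀ i (x : n → ℝ) (r : m i), (Qb i *ᵥ x) r = (Q *ᵥ x) ⟨i, r⟩ := by
    intro i x r
    simp [hQb, Matrix.mulVec, dotProduct]
  have hQbcon : ∀ i (x : n → ℝ), (Qb i *ᵥ x) ⬝ᵥ (Qb i *ᵥ x) ≤ x ⬝ᵥ x := by
    intro i x
    refine le_trans ?_ (hQcon x)
    have hsum : (Q *ᵥ x) ⬝ᵥ (Q *ᵥ x) = ∑ i', ∑ r, (Q *ᵥ x) ⟨i', r⟩ * (Q *ᵥ x) ⟨i', r⟩ := by
      rw [dotProduct, ← Finset.univ_sigma_univ, Finset.sum_sigma]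
    rw [hsum]
    have hle : (Qb i *ᵥ x) ⬝ᵥ (Qb i *ᵥ x) = ∑ r, (Q *ᵥ x) ⟨i, r⟩ * (Q *ᵥ x) ⟨i, r⟩ := by
      rw [dotProduct]
      exact Finset.sum_congr rfl fun r _ => by rw [hQbV]
    rw [hle]
    exact Finset.single_le_sum (f := fun i' => ∑ r, (Q *ᵥ x) ⟨i', r⟩ * (Q *ᵥ x) ⟨i', r⟩)
      (fun i' _ => Finset.sum_nonneg fun r _ => mul_self_nonneg _) (Finset.mem_univ i)
  -- trace splitting
  have hsplit : (Qᴴ * C).trace = ∑ i, ((Qb i)ᴴ * A i).trace := by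
    simp only [Matrix.trace, Matrix.diag, Matrix.mul_apply, Matrix.conjTranspose_apply,
      star_trivial, hQb, Matrix.of_apply, hCdef]
    rw [Finset.sum_comm, ← Finset.univ_sigma_univ, Finset.sum_sigma]
    refine Finset.sum_congr rfl fun i _ => Finset.sum_comm
  -- conclusion
  rw [ge_iff_le]
  have hTNC : traceNorm C = ∑ j, Real.sqrt (μ j) := by
    rw [traceNorm]; exact trace_sqrt_eq hB
  calc traceNorm C = (Qᴴ * C).trace := by rw [hTNC, htr]
    _ = ∑ i, ((Qb i)ᴴ * A i).trace := hsplit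
    _ ≤ ∑ i, traceNorm (A i) :=
        Finset.sum_le_sum fun i _ => trace_le_traceNorm (A i) (Qb i) (hQbcon i)
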